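/- arXiv:0706.3739 — 3 statements merged into one kernel-verified Lean document; each statement's English description precedes it below -/
import Mathlib

section
/- Let A be an abelian category and W ⊆ X classes of objects of A such that W is an injective cogenerator for X, i.e., Extⁱ_A(X, W) = 0 for all i ≥ 1, X ∈ X, W ∈ W, and for each X ∈ X there is an exact sequence 0 → X → W → X' → 0 with W ∈ W and X' ∈ X. Then: (i) for every bounded strict WX-resolution of an object M, i.e., an exact sequence 0 → X_n → ⋯ → X₁ → X₀ → M → 0 with X₀ ∈ X and X_j ∈ W for j ≥ 1, the sequence remains exact after applying Hom_A(X', −) for every X' ∈ X; (ii) every WX-approximation of M, i.e., an exact sequence 0 → K → X₀ → M → 0 with X₀ ∈ X and K admitting a bounded W-resolution, remains exact after applying Hom_A(X', −) for every X' ∈ X. -/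
/-! Common definitions: relative homological algebra in an abelian category,
following Sather-Wagstaff–Sharif–White, "Gorenstein cohomology in abelian categories". -/

open CategoryTheory CategoryTheory.Limits Opposite

universe w v u

section Prelude

variable {C : Type u} [Category.{v} C] [Abelian C]

/-- `Ext^i_A(M,N) = 0` for all `i ≥ 1`. -/
def ExtVanish [HasExt.{w} C] (M N : C) : Prop :=
  ∀ (i : ℕ), 1 ≤ i → ∀ (e : Abelian.Ext M N i), e = 0

/-- The complex of abelian groups `Hom_A(K, N)` obtained by applying `Hom_A(-, N)`
termwise to a complex `K`; the degree `j` term is `Hom_A(K_j, N)`, so that its homology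
in degree `n` is `H₋ₙ(Hom_A(K,N))` in the homological indexing of the paper. -/
noncomputable def homToCplx {ι : Type*} (c : ComplexShape ι) (N : C) :
    (HomologicalComplex C c)ᵒᵖ ⥤ HomologicalComplex AddCommGrpCat.{v} c.symm :=
  HomologicalComplex.opFunctor _ _ ⋙ (preadditiveYoneda.obj N).mapHomologicalComplex _

/-- The complex of abelian groups `Hom_A(A, K)` obtained by applying `Hom_A(A, -)`
termwise to a complex `K`. -/
noncomputable def homFromCplx {ι : Type*} (c : ComplexShape ι) (A : C) :
    HomologicalComplex C c ⥤ HomologicalComplex AddCommGrpCat.{v} c :=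
  (preadditiveCoyoneda.obj (op A)).mapHomologicalComplex _

/-- A nonnegatively graded chain complex equipped with an augmentation to `M`. -/
structure AugChain (M : C) where
  cx : ChainComplex C ℕ
  π : cx.X 0 ⟶ M
  w : cx.d 1 0 ≫ π = 0

namespace AugChain

variable {M : C} (R : AugChain M)

/-- The augmented complex `X⁺ = (⋯ → X₁ → X₀ → M → 0)`. -/
noncomputable def aug : ChainComplex C ℕ := R.cx.augment R.π R.w

/-- The augmented complex is exact (at degree `0` this says that `π` is an epimorphism). -/
def IsRes : Prop := ∀ j, R.aug.ExactAt j

/-- The terms of the complex vanish in degrees `> n`. -/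
def BddBy (n : ℕ) : Prop := ∀ j, n < j → IsZero (R.cx.X j)

/-- The augmented complex `X⁺` stays exact after applying `Hom_A(A, -)`. -/
def HomFromExact (A : C) : Prop :=
  ∀ j, (((homFromCplx (ComplexShape.down ℕ) A)).obj R.aug).ExactAt j

/-- The augmented complex `X⁺` stays exact after applying `Hom_A(-, A)`. -/
def HomToExact (A : C) : Prop :=
  ∀ j, ((homToCplx (ComplexShape.down ℕ) A).obj (op R.aug)).ExactAt j

/-- A bounded `𝒲`-resolution of `M` of length at most `n`:
an exact sequence `0 → W_n → ⋯ → W₀ → M → 0` with each `W_j ∈ 𝒲`. -/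
def IsBddResBy (𝒲 : C → Prop) (n : ℕ) : Prop :=
  R.IsRes ∧ (∀ j, j ≤ n → 𝒲 (R.cx.X j)) ∧ R.BddBy n

/-- A proper `𝒳`-resolution of `M`: all terms lie in `𝒳`, the augmented complex is
exact, and it stays exact after applying `Hom_A(X', -)` for every `X' ∈ 𝒳`. -/
def IsProperRes (𝒳 : C → Prop) : Prop :=
  R.IsRes ∧ (∀ j, 𝒳 (R.cx.X j)) ∧ ∀ A, 𝒳 A → R.HomFromExact A

/-- A projective resolution of `M`. -/
def IsProjRes : Prop :=
  R.IsRes ∧ ∀ j, Projective (R.cx.X j)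

/-- A bounded strict `𝒲𝒳`-resolution of `M` of length at most `n`: an exact sequence
`0 → X_n → ⋯ → X₁ → X₀ → M → 0` with `X₀ ∈ 𝒳` and `X_j ∈ 𝒲` for `1 ≤ j ≤ n`. -/
def IsStrictResBy (𝒲 𝒳 : C → Prop) (n : ℕ) : Prop :=
  R.IsRes ∧ R.BddBy n ∧ 𝒳 (R.cx.X 0) ∧ ∀ j, 1 ≤ j → j ≤ n → 𝒲 (R.cx.X j)

end AugChain

/-- `M` admits a bounded `𝒲`-resolution of length at most `n`. -/
def HasBddResBy (𝒲 : C → Prop) (M : C) (n : ℕ) : Prop :=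
  ∃ R : AugChain M, R.IsBddResBy 𝒲 n

/-- `M` admits a bounded `𝒲`-resolution, i.e. `𝒲`-pd of `M` is finite. -/
def HasBddRes (𝒲 : C → Prop) (M : C) : Prop :=
  ∃ n, HasBddResBy 𝒲 M n

/-- `M` admits a proper `𝒲`-resolution. -/
def HasProperRes (𝒲 : C → Prop) (M : C) : Prop :=
  ∃ R : AugChain M, R.IsProperRes 𝒲

/-- A nonnegatively graded cochain complex equipped with an augmentation from `N`. -/
structure AugCochain (N : C) where
  cx : CochainComplex C ℕ
  ι : N ⟶ cx.X 0
  w : ι ≫ cx.d 0 1 = 0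

namespace AugCochain

variable {N : C} (R : AugCochain N)

/-- The augmented complex `⁺Y = (0 → N → Y⁰ → Y¹ → ⋯)`. -/
noncomputable def aug : CochainComplex C ℕ := R.cx.augment R.ι R.w

/-- The augmented complex is exact (at degree `0` this says that `ι` is a monomorphism). -/
def IsCores : Prop := ∀ j, R.aug.ExactAt j

/-- The terms of the complex vanish in degrees `> n`. -/
def BddBy (n : ℕ) : Prop := ∀ j, n < j → IsZero (R.cx.X j)

/-- The augmented complex `⁺Y` stays exact after applying `Hom_A(A, -)`. -/
def HomFromExact (A : C) : Prop :=
  ∀ j, ((homFromCplx (ComplexShape.up ℕ) A).obj R.aug).ExactAt j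

/-- The augmented complex `⁺Y` stays exact after applying `Hom_A(-, A)`. -/
def HomToExact (A : C) : Prop :=
  ∀ j, ((homToCplx (ComplexShape.up ℕ) A).obj (op R.aug)).ExactAt j

/-- A bounded `𝒱`-coresolution of `N` of length at most `n`:
an exact sequence `0 → N → V⁰ → ⋯ → Vⁿ → 0` with each `Vʲ ∈ 𝒱`. -/
def IsBddCoresBy (𝒱 : C → Prop) (n : ℕ) : Prop :=
  R.IsCores ∧ (∀ j, j ≤ n → 𝒱 (R.cx.X j)) ∧ R.BddBy n

/-- A proper `𝒴`-coresolution of `N`. -/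
def IsProperCores (𝒴 : C → Prop) : Prop :=
  R.IsCores ∧ (∀ j, 𝒴 (R.cx.X j)) ∧ ∀ A, 𝒴 A → R.HomToExact A

end AugCochain

/-- `N` admits a bounded `𝒱`-coresolution of length at most `n`. -/
def HasBddCoresBy (𝒱 : C → Prop) (N : C) (n : ℕ) : Prop :=
  ∃ R : AugCochain N, R.IsBddCoresBy 𝒱 n

/-- `N` admits a bounded `𝒱`-coresolution, i.e. `𝒱`-id of `N` is finite. -/
def HasBddCores (𝒱 : C → Prop) (N : C) : Prop :=
  ∃ n, HasBddCoresBy 𝒱 N n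

/-- `𝒲` is a cogenerator for `𝒳`: `𝒲 ⊆ 𝒳` and every `X ∈ 𝒳` fits in a short exact
sequence `0 → X → W → X' → 0` with `W ∈ 𝒲` and `X' ∈ 𝒳`. -/
def IsCogenFor (𝒲 𝒳 : C → Prop) : Prop :=
  (∀ A, 𝒲 A → 𝒳 A) ∧
  ∀ X, 𝒳 X → ∃ (W X' : C) (i : X ⟶ W) (p : W ⟶ X') (hw : i ≫ p = 0),
    𝒲 W ∧ 𝒳 X' ∧ (ShortComplex.mk i p hw).ShortExact

/-- `𝒱` is a generator for `𝒴`: `𝒱 ⊆ 𝒴` and every `Y ∈ 𝒴` fits in a short exact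
sequence `0 → Y' → V → Y → 0` with `V ∈ 𝒱` and `Y' ∈ 𝒴`. -/
def IsGenFor (𝒱 𝒴 : C → Prop) : Prop :=
  (∀ A, 𝒱 A → 𝒴 A) ∧
  ∀ Y, 𝒴 Y → ∃ (Y' V : C) (i : Y' ⟶ V) (p : V ⟶ Y) (hw : i ≫ p = 0),
    𝒴 Y' ∧ 𝒱 V ∧ (ShortComplex.mk i p hw).ShortExact

/-- `𝒳` is closed under extensions. -/
def ClosedUnderExt (𝒳 : C → Prop) : Prop :=
  ∀ (S : ShortComplex C), S.ShortExact → 𝒳 S.X₁ → 𝒳 S.X₃ → 𝒳 S.X₂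

/-- `𝒳` is closed under isomorphisms. -/
def IsoClosed (𝒳 : C → Prop) : Prop :=
  ∀ ⦃A B : C⦄, (A ≅ B) → 𝒳 A → 𝒳 B

end Prelude

/-! Cut the augmented resolution into the short exact sequences
`0 → Z_{k+1} → X_{k+2} → Z_k → 0` of its cycles `Z_k = ker (X_{k+1} → X_k)`. Descending
induction from the top degree, where `Z_k = 0`, together with the long exact sequence of
`Ext(X', -)` gives `Ext^{≥1}(X', Z_k) = 0` for all `k`. The vanishing of `Ext¹(X', Z_k)` is
exactly what is needed to lift maps `X' → Z_k` along the epimorphism `X_{k+2} → Z_k`, i.e. for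
`Hom(X', -)` to preserve exactness. For a `𝒲`-resolution of `K` the same induction, one step
further, gives `Ext^{≥1}(X', K) = 0`, so `Hom(X', -)` keeps `0 → K → X₀ → M → 0` exact. -/

open Abelian

variable {C : Type u} [Category.{v} C] [Abelian C]

namespace CategoryTheory.ShortComplex

variable {S : ShortComplex C}

noncomputable abbrev kernelLiftSequence (S : ShortComplex C) : ShortComplex C :=
  ShortComplex.mk (kernel.ι S.f) (kernel.lift S.g S.f S.zero) (by ext; simp)

theorem Exact.shortExact_kernelLiftSequence (hS : S.Exact) :
    S.kernelLiftSequence.ShortExact where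
  exact := exact_of_f_is_kernel _ <|
    isKernelOfComp (kernel.ι S.g) S.f (kernelIsKernel S.f) S.kernelLiftSequence.zero (by simp)
  mono_f := inferInstanceAs (Mono (kernel.ι S.f))
  epi_g := (exact_iff_epi_kernel_lift S).1 hS

variable [HasExt.{w} C]

theorem ShortExact.exists_comp_g_eq (hS : S.ShortExact) {X : C}
    (h : ∀ e : Ext.{w} X S.X₁ 1, e = 0) (φ : X ⟶ S.X₃) : ∃ ψ : X ⟶ S.X₂, ψ ≫ S.g = φ := by
  obtain ⟨x, hx⟩ := Ext.covariant_sequence_exact₃ X hS (Ext.mk₀ φ) (zero_add 1) (h _)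
  obtain ⟨ψ, rfl⟩ := (Ext.mk₀_bijective X S.X₂).2 x
  exact ⟨ψ, (Ext.mk₀_bijective X S.X₃).1 (by simpa using hx)⟩

theorem ShortExact.map_preadditiveCoyoneda_obj (hS : S.ShortExact) {X : C}
    (h : ∀ e : Ext.{w} X S.X₁ 1, e = 0) :
    (S.map (preadditiveCoyoneda.obj (Opposite.op X))).ShortExact where
  exact := hS.exact.map_of_mono_of_preservesKernel _ hS.mono_f inferInstance
  mono_f := by
    have := hS.mono_f
    exact (preadditiveCoyoneda.obj (Opposite.op X)).map_mono S.f
  epi_g := (AddCommGrpCat.epi_iff_surjective _).2 (hS.exists_comp_g_eq h)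

theorem Exact.exists_comp_f_eq (hS : S.Exact) {X : C}
    (h : ∀ e : Ext.{w} X (kernel S.f) 1, e = 0) (φ : X ⟶ S.X₂) (hφ : φ ≫ S.g = 0) :
    ∃ ψ : X ⟶ S.X₁, ψ ≫ S.f = φ := by
  obtain ⟨ψ, hψ⟩ := hS.shortExact_kernelLiftSequence.exists_comp_g_eq h (kernel.lift S.g φ hφ)
  refine ⟨ψ, ?_⟩
  calc ψ ≫ S.f = (ψ ≫ S.kernelLiftSequence.g) ≫ kernel.ι S.g := by simp
    _ = φ := by rw [hψ, kernel.lift_ι]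

end CategoryTheory.ShortComplex

variable [HasExt.{w} C]

namespace ExtVanish

theorem of_isZero {X N : C} (hN : IsZero N) : ExtVanish.{w} X N := by
  have := hN.injective
  rintro (_ | i) hi e
  · omega
  · exact Ext.eq_zero_of_injective e

theorem of_shortExact {X : C} {S : ShortComplex C} (hS : S.ShortExact)
    (h₁ : ExtVanish.{w} X S.X₁) (h₂ : ExtVanish.{w} X S.X₂) : ExtVanish.{w} X S.X₃ := by
  intro i hi e
  obtain ⟨x, rfl⟩ := Ext.covariant_sequence_exact₃ X hS e rfl (h₁ (i + 1) (by omega) _)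
  rw [h₂ i hi x, Ext.zero_comp]

end ExtVanish

namespace ChainComplex

variable {K : ChainComplex C ℕ} {X : C}

theorem extVanish_kernel_d {n : ℕ} (hK : ∀ j, K.ExactAt j) (hn : ∀ j, n < j → IsZero (K.X j))
    (hX : ∀ j, ExtVanish.{w} X (K.X (j + 2))) (k : ℕ) :
    ExtVanish.{w} X (kernel (K.d (k + 1) k)) := by
  induction hk : n - k generalizing k with
  | zero => exact .of_isZero ((hn (k + 1) (by omega)).of_mono (kernel.ι _))
  | succ t ih =>
    have hS := (K.exactAt_iff' (k + 2) (k + 1) k (by simp) (by simp)).1 (hK (k + 1))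
    exact .of_shortExact hS.shortExact_kernelLiftSequence (ih (k + 1) (by omega)) (hX k)

theorem exactAt_homFromCplx {j : ℕ} (hK : K.ExactAt j)
    (h : ∀ e : Ext.{w} X (kernel (K.d (j + 1) j)) 1, e = 0) :
    ((homFromCplx (ComplexShape.down ℕ) X).obj K).ExactAt j := by
  rw [HomologicalComplex.exactAt_iff' _ (j + 1) j _ (by simp) rfl, ShortComplex.ab_exact_iff]
  intro φ hφ
  exact ((K.exactAt_iff' (j + 1) j _ (by simp) rfl).1 hK).exists_comp_f_eq h φ hφ

end ChainComplex

namespace AugChain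

variable {M X : C} {R : AugChain M} {n : ℕ}

theorem extVanish_kernel_aug_d (hR : R.IsRes) (hn : R.BddBy n)
    (hX : ∀ j, 1 ≤ j → j ≤ n → ExtVanish.{w} X (R.cx.X j)) (k : ℕ) :
    ExtVanish.{w} X (kernel (R.aug.d (k + 1) k)) := by
  refine ChainComplex.extVanish_kernel_d hR (n := n + 1) ?_ (fun j => ?_) k
  · rintro (_ | j) hj
    · omega
    · exact hn j (by omega)
  · by_cases hj : j + 1 ≤ n
    · exact hX (j + 1) (by omega) hj
    · exact .of_isZero (hn (j + 1) (by omega))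

theorem homFromExact_of_extVanish (hR : R.IsRes) (hn : R.BddBy n)
    (hX : ∀ j, 1 ≤ j → j ≤ n → ExtVanish.{w} X (R.cx.X j)) : R.HomFromExact X := fun j =>
  ChainComplex.exactAt_homFromCplx (hR j) (extVanish_kernel_aug_d hR hn hX j 1 le_rfl)

theorem IsBddResBy.extVanish (hR : R.IsBddResBy (ExtVanish.{w} X) n) : ExtVanish.{w} X M := by
  obtain ⟨hres, hX, hn⟩ := hR
  have hepi : Epi (R.aug.d 1 0) :=
    ((R.aug.exactAt_iff' 1 0 0 (by simp) (by simp)).1 (hres 0)).epi_f (R.aug.shape 0 0 (by simp))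
  have hS : (ShortComplex.kernelSequence (R.aug.d 1 0)).ShortExact :=
    { exact := ShortComplex.kernelSequence_exact _, epi_g := hepi }
  exact .of_shortExact hS (extVanish_kernel_aug_d hres hn (fun j _ hj => hX j hj) 0)
    (hX 0 (Nat.zero_le n))

end AugChain

theorem stmt3_general {C : Type u} [Category.{v} C] [Abelian C] [HasExt.{w} C]
    (𝒲 𝒳 : C → Prop)
    (hperp : ∀ X W, 𝒳 X → 𝒲 W → ExtVanish X W) :
    (∀ (M : C) (R : AugChain M) (n : ℕ), R.IsStrictResBy 𝒲 𝒳 n →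
      ∀ X', 𝒳 X' → R.HomFromExact X') ∧
    (∀ (M K X₀ : C) (i : K ⟶ X₀) (p : X₀ ⟶ M) (hw : i ≫ p = 0),
      (ShortComplex.mk i p hw).ShortExact → 𝒳 X₀ → HasBddRes 𝒲 K →
      ∀ X', 𝒳 X' →
        ((ShortComplex.mk i p hw).map (preadditiveCoyoneda.obj (op X'))).ShortExact) := by
  constructor
  · rintro M R n ⟨hR, hn, -, h𝒲⟩ X' hX'
    exact AugChain.homFromExact_of_extVanish hR hn fun j h₁ h₂ => hperp _ _ hX' (h𝒲 j h₁ h₂)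
  · rintro M K X₀ i p hw hS - ⟨n, R, hR, h𝒲, hn⟩ X' hX'
    have hK : ExtVanish X' K :=
      AugChain.IsBddResBy.extVanish ⟨hR, fun j hj => hperp _ _ hX' (h𝒲 j hj), hn⟩
    exact hS.map_preadditiveCoyoneda_obj (hK 1 le_rfl)

/-- Lemma 3.4(a)(b). Let `𝒲` be an injective cogenerator for `𝒳`
(i.e. `𝒲` is a cogenerator for `𝒳` and `Ext^{≥1}_A(X, W) = 0` for `X ∈ 𝒳`, `W ∈ 𝒲`).
Then: (i) every bounded strict `𝒲𝒳`-resolution of an object `M` stays exact after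
applying `Hom_A(X', -)` for every `X' ∈ 𝒳`; (ii) every `𝒲𝒳`-approximation
`0 → K → X₀ → M → 0` (with `X₀ ∈ 𝒳` and `K` of finite `𝒲`-projective dimension)
stays exact after applying `Hom_A(X', -)` for every `X' ∈ 𝒳`. -/
theorem stmt3 {C : Type u} [Category.{v} C] [Abelian C] [HasExt.{w} C]
    (𝒲 𝒳 : C → Prop) (h𝒲 : IsoClosed 𝒲) (h𝒳 : IsoClosed 𝒳)
    (hcogen : IsCogenFor 𝒲 𝒳)
    (hperp : ∀ X W, 𝒳 X → 𝒲 W → ExtVanish X W) :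
    (∀ (M : C) (R : AugChain M) (n : ℕ), R.IsStrictResBy 𝒲 𝒳 n →
      ∀ X', 𝒳 X' → R.HomFromExact X') ∧
    (∀ (M K X₀ : C) (i : K ⟶ X₀) (p : X₀ ⟶ M) (hw : i ≫ p = 0),
      (ShortComplex.mk i p hw).ShortExact → 𝒳 X₀ → HasBddRes 𝒲 K →
      ∀ X', 𝒳 X' →
        ((ShortComplex.mk i p hw).map (preadditiveCoyoneda.obj (op X'))).ShortExact) :=
  stmt3_general 𝒲 𝒳 hperp
end

section
/- Let A be an abelian category, X a class of objects of A closed under extensions, and W a cogenerator for X. If an object M admits a bounded X-resolution of length n (an exact sequence 0 → X_n → ⋯ → X₀ → M → 0 with each X_j ∈ X), then: (i) M admits a bounded strict WX-resolution of length at most n, i.e., an exact sequence 0 → X'_n → ⋯ → X'₁ → X'₀ → M → 0 with X'₀ ∈ X and X'_j ∈ W for j ≥ 1; (ii) M admits a WX-approximation, i.e., an exact sequence 0 → K → X₀ → M → 0 with X₀ ∈ X and K admitting a bounded W-resolution; and (iii) M admits a WX-hull, i.e., an exact sequence 0 → M → K' → X' → 0 with X' ∈ X and K' admitting a bounded W-resolution.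 -/
/-! Common definitions: relative homological algebra in an abelian category,
following Sather-Wagstaff–Sharif–White, "Gorenstein cohomology in abelian categories". -/

open CategoryTheory CategoryTheory.Limits Opposite

universe w v u

/-!
Following Auslander–Buchweitz, the argument runs on resolutions split into short exact
sequences. If `0 → K → X₀ → M → 0` starts a strict `𝒲𝒳`-resolution of `M`, pushing it out along
a cogenerator sequence `0 → X₀ → W → X' → 0` gives a hull `0 → M → U → X' → 0` with
`0 → K → W → U → 0`, so `U` has a `𝒲`-resolution one step longer than `K`. Conversely, given
`0 → M₁ → X₀ → M → 0` with `X₀ ∈ 𝒳` and such a hull `0 → M₁ → U → X' → 0` of `M₁`, the pushout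
`V` of `X₀ ← M₁ → U` is an extension of `X'` by `X₀`, hence in `𝒳`, and `0 → U → V → M → 0`
extends the strict resolution by one step. Induction along a bounded `𝒳`-resolution therefore
gives a strict `𝒲𝒳`-resolution of the same length, from which the approximation and the hull are
read off.
-/

namespace CategoryTheory.IsPushout

variable {C : Type u} [Category.{v} C] [Abelian C] {X₁ X₂ X₃ X₄ : C}
  {t : X₁ ⟶ X₂} {l : X₁ ⟶ X₃} {r : X₂ ⟶ X₄} {b : X₃ ⟶ X₄}

lemma shortExact_of_shortExact_top (h : IsPushout t l r b) {Q : C} {c : X₂ ⟶ Q}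
    {w : t ≫ c = 0} (hS : (ShortComplex.mk t c w).ShortExact) :
    (ShortComplex.mk b (h.desc c 0 (by simp [w])) (h.inr_desc _ _ _)).ShortExact := by
  have : Epi c := hS.epi_g
  have : Mono b := (MorphismProperty.monomorphisms C).of_isPushout h.flip hS.mono_f
  have : Epi (h.desc c 0 (by simp [w])) := epi_of_epi_fac (h.inl_desc _ _ _)
  refine .mk' (ShortComplex.exact_of_g_is_cokernel _ ?_) inferInstance inferInstance
  refine CokernelCofork.IsColimit.ofπ' _ _ fun {T} φ (hφ : b ≫ φ = 0) => ?_
  obtain ⟨ψ, hψ⟩ := CokernelCofork.IsColimit.desc' hS.gIsCokernel (r ≫ φ)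
    (by rw [h.w_assoc, hφ, comp_zero])
  exact ⟨ψ, h.hom_ext (by simpa using hψ) (by simpa using hφ.symm)⟩

lemma shortExact_of_shortExact_left (h : IsPushout t l r b) [Mono t] {K : C} {k : K ⟶ X₁}
    {w : k ≫ l = 0} (hS : (ShortComplex.mk k l w).ShortExact) :
    (ShortComplex.mk (k ≫ t) r
      (by rw [Category.assoc, h.w, reassoc_of% w, zero_comp])).ShortExact := by
  have : Mono k := hS.mono_f
  have : Epi r := (MorphismProperty.epimorphisms C).of_isPushout h hS.epi_g
  refine .mk' (ShortComplex.exact_of_g_is_cokernel _ ?_) inferInstance inferInstance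
  refine CokernelCofork.IsColimit.ofπ' _ _ fun {T} φ (hφ : (k ≫ t) ≫ φ = 0) => ?_
  obtain ⟨ψ, hψ⟩ := CokernelCofork.IsColimit.desc' hS.gIsCokernel (t ≫ φ)
    (by rwa [← Category.assoc])
  exact ⟨h.desc φ ψ hψ.symm, h.inl_desc _ _ _⟩

end CategoryTheory.IsPushout

namespace ChainComplex

variable {C : Type u} [Category.{v} C] [Abelian C] (K : ChainComplex C ℕ)

lemma exactAt_succ_iff (j : ℕ) :
    K.ExactAt (j + 1) ↔
      (ShortComplex.mk (K.d (j + 2) (j + 1)) (K.d (j + 1) j) (K.d_comp_d _ _ _)).Exact :=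
  K.exactAt_iff' (j + 2) (j + 1) j (by simp) (by simp)

lemma truncate_exactAt_succ_iff (j : ℕ) :
    (truncate.obj K).ExactAt (j + 1) ↔ K.ExactAt (j + 2) := by
  rw [exactAt_succ_iff, exactAt_succ_iff]
  rfl

variable {X : C} (f : K.X 0 ⟶ X) (w : K.d 1 0 ≫ f = 0)

lemma augment_exactAt_zero_iff : (K.augment f w).ExactAt 0 ↔ Epi f := by
  rw [HomologicalComplex.exactAt_iff' _ 1 0 0 (by simp) (by simp)]
  exact ShortComplex.exact_iff_epi _ ((K.augment f w).shape 0 0 (by simp))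

lemma augment_exactAt_one_iff :
    (K.augment f w).ExactAt 1 ↔ (ShortComplex.mk (K.d 1 0) f w).Exact :=
  exactAt_succ_iff _ 0

lemma augment_exactAt_succ_succ_iff (j : ℕ) :
    (K.augment f w).ExactAt (j + 2) ↔ K.ExactAt (j + 1) := by
  rw [exactAt_succ_iff, exactAt_succ_iff]
  rfl

end ChainComplex

namespace CategoryTheory.ShortComplex

variable {C : Type u} [Category.{v} C] [Abelian C] {X₀ X₁ X₂ X₃ X₄ : C}

lemma exact_epi_comp_iff (e : X₀ ⟶ X₁) [Epi e] {f : X₁ ⟶ X₂} {g : X₂ ⟶ X₃} (w : f ≫ g = 0) :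
    (mk (e ≫ f) g (by rw [Category.assoc, w, comp_zero])).Exact ↔ (mk f g w).Exact :=
  exact_iff_of_epi_of_isIso_of_mono
    (S₁ := mk (e ≫ f) g _) (S₂ := mk f g w) ⟨e, 𝟙 _, 𝟙 _, by simp, by simp⟩

lemma exact_comp_mono_iff {f : X₁ ⟶ X₂} {g : X₂ ⟶ X₃} {g' : X₂ ⟶ X₄} (m : X₃ ⟶ X₄) [Mono m]
    (hg : g ≫ m = g') (w : f ≫ g = 0) {w' : f ≫ g' = 0} :
    (mk f g' w').Exact ↔ (mk f g w).Exact :=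
  (exact_iff_of_epi_of_isIso_of_mono
    (S₁ := mk f g w) (S₂ := mk f g' w') ⟨𝟙 _, 𝟙 _, m, by simp, by simp [hg]⟩).symm

end CategoryTheory.ShortComplex

namespace AugChain

variable {C : Type u} [Category.{v} C] [Abelian C] {M : C}

lemma isRes_iff (R : AugChain M) :
    R.IsRes ↔ Epi R.π ∧ (ShortComplex.mk (R.cx.d 1 0) R.π R.w).Exact ∧
      ∀ j, R.cx.ExactAt (j + 1) := by
  refine ⟨fun h => ⟨(R.cx.augment_exactAt_zero_iff _ R.w).1 (h 0),
    (R.cx.augment_exactAt_one_iff _ R.w).1 (h 1),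
    fun j => (R.cx.augment_exactAt_succ_succ_iff _ R.w j).1 (h (j + 2))⟩, ?_⟩
  rintro ⟨hπ, h₀, h⟩ (_ | _ | j)
  · exact (R.cx.augment_exactAt_zero_iff _ R.w).2 hπ
  · exact (R.cx.augment_exactAt_one_iff _ R.w).2 h₀
  · exact (R.cx.augment_exactAt_succ_succ_iff _ R.w j).2 (h j)

lemma w_assoc (R : AugChain M) {Y : C} (i : M ⟶ Y) : R.cx.d 1 0 ≫ R.π ≫ i = 0 := by
  rw [reassoc_of% R.w, zero_comp]

lemma IsRes.epi_π {R : AugChain M} (hR : R.IsRes) : Epi R.π :=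
  (R.isRes_iff.1 hR).1

noncomputable def single (M : C) : AugChain M where
  cx := (ChainComplex.single₀ C).obj M
  π := 𝟙 M
  w := by rw [HomologicalComplex.single_obj_d]; exact zero_comp

lemma single_isRes (M : C) : (single M).IsRes := by
  refine (isRes_iff _).2 ⟨inferInstanceAs (Epi (𝟙 M)), ?_, ChainComplex.exactAt_succ_single_obj M⟩
  exact (ShortComplex.exact_iff_mono _ (HomologicalComplex.single_obj_d (.down ℕ) 0 M 1 0)).2
    (inferInstanceAs (Mono (𝟙 M)))

lemma single_bddBy (M : C) : (single M).BddBy 0 := by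
  rintro (_ | j) hj
  · omega
  · exact HomologicalComplex.isZero_single_obj_X (.down ℕ) 0 M (j + 1) (by simp)

section Prepend

variable {K Y : C} (R : AugChain K) (i : K ⟶ Y) (p : Y ⟶ M) (w : i ≫ p = 0)

noncomputable def prepend : AugChain M where
  cx := R.cx.augment (R.π ≫ i) (R.w_assoc i)
  π := p
  w := show (R.π ≫ i) ≫ p = 0 by rw [Category.assoc, w, comp_zero]

variable {R i p w}

lemma IsRes.prepend (hR : R.IsRes) (hS : (ShortComplex.mk i p w).ShortExact) :
    (R.prepend i p w).IsRes := by
  obtain ⟨hπ, h₀, h⟩ := R.isRes_iff.1 hR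
  have : Mono i := hS.mono_f
  refine (isRes_iff _).2 ⟨hS.epi_g, ?_, ?_⟩
  · exact (ShortComplex.exact_epi_comp_iff R.π w).2 hS.exact
  · rintro (_ | j)
    · exact (R.cx.augment_exactAt_one_iff _ (R.w_assoc i)).2
        ((ShortComplex.exact_comp_mono_iff i rfl R.w).2 h₀)
    · exact (R.cx.augment_exactAt_succ_succ_iff _ (R.w_assoc i) j).2 (h j)

lemma BddBy.prepend {n : ℕ} (h : R.BddBy n) : (R.prepend i p w).BddBy (n + 1) := by
  rintro (_ | j) hj
  · omega
  · exact h j (by omega)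

end Prepend

noncomputable def syzygy (R : AugChain M) : AugChain (kernel R.π) where
  cx := ChainComplex.truncate.obj R.cx
  π := kernel.lift R.π (R.cx.d 1 0) R.w
  w := by
    change R.cx.d 2 1 ≫ kernel.lift R.π (R.cx.d 1 0) R.w = 0
    simp [← cancel_mono (kernel.ι R.π)]

lemma IsRes.syzygy {R : AugChain M} (hR : R.IsRes) : R.syzygy.IsRes := by
  obtain ⟨-, h₀, h⟩ := R.isRes_iff.1 hR
  refine (isRes_iff _).2 ⟨h₀.epi_kernelLift, ?_,
    fun j => (R.cx.truncate_exactAt_succ_iff j).2 (h (j + 1))⟩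
  exact (ShortComplex.exact_comp_mono_iff (kernel.ι R.π) (kernel.lift_ι _ _ _) _).1
    ((R.cx.exactAt_succ_iff 0).1 (h 0))

lemma IsRes.shortExact_kernel {R : AugChain M} (hR : R.IsRes) :
    (ShortComplex.mk (kernel.ι R.π) R.π (kernel.condition _)).ShortExact :=
  have := hR.epi_π
  .mk' (ShortComplex.exact_of_f_is_kernel _ (kernelIsKernel _)) inferInstance inferInstance

end AugChain

section Resolutions

variable {C : Type u} [Category.{v} C] [Abelian C] {𝒲 𝒳 𝒴 : C → Prop}

/-- `M` has a `𝒴`-resolution of length `n`, given as the short exact sequences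
`0 → K → Y → M → 0` into which it splits. -/
def ResolvedBy (𝒴 : C → Prop) : ℕ → C → Prop
  | 0, M => 𝒴 M
  | n + 1, M => ∃ (K Y : C) (i : K ⟶ Y) (p : Y ⟶ M) (w : i ≫ p = 0),
      (ShortComplex.mk i p w).ShortExact ∧ 𝒴 Y ∧ ResolvedBy 𝒴 n K

/-- The spliced form of a strict `𝒲𝒳`-resolution `0 → W_n → ⋯ → W₁ → X₀ → M → 0`. -/
def StrictlyResolvedBy (𝒲 𝒳 : C → Prop) : ℕ → C → Prop
  | 0, M => 𝒳 M
  | n + 1, M => ∃ (K X : C) (i : K ⟶ X) (p : X ⟶ M) (w : i ≫ p = 0),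
      (ShortComplex.mk i p w).ShortExact ∧ 𝒳 X ∧ ResolvedBy 𝒲 n K

lemma AugChain.IsBddResBy.resolvedBy (h𝒴 : IsoClosed 𝒴) :
    ∀ {n : ℕ} {M : C} {R : AugChain M}, R.IsBddResBy 𝒴 n → ResolvedBy 𝒴 n M
  | 0, _, R, ⟨hR, hterms, hbdd⟩ => by
    obtain ⟨hπ, h₀, -⟩ := R.isRes_iff.1 hR
    have : Mono R.π := (ShortComplex.exact_iff_mono _ ((hbdd 1 one_pos).eq_of_src _ _)).1 h₀
    have : IsIso R.π := isIso_of_mono_of_epi _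
    exact h𝒴 (asIso R.π) (hterms 0 le_rfl)
  | n + 1, _, R, ⟨hR, hterms, hbdd⟩ =>
    ⟨_, _, _, _, _, hR.shortExact_kernel, hterms 0 n.succ.zero_le,
      resolvedBy h𝒴 ⟨hR.syzygy, fun j hj => hterms (j + 1) (by omega),
        fun j hj => hbdd (j + 1) (by omega)⟩⟩

lemma ResolvedBy.hasBddResBy : ∀ {n : ℕ} {M : C}, ResolvedBy 𝒴 n M → HasBddResBy 𝒴 M n
  | 0, M, hM => ⟨.single M, AugChain.single_isRes M,
    fun j hj => by obtain rfl := Nat.le_zero.1 hj; exact hM, AugChain.single_bddBy M⟩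
  | n + 1, _, ⟨_, _, i, p, w, hS, hY, hK⟩ => by
    obtain ⟨R, hR, hterms, hbdd⟩ := hK.hasBddResBy
    refine ⟨R.prepend i p w, hR.prepend hS, ?_, hbdd.prepend⟩
    rintro (_ | j) hj
    exacts [hY, hterms j (by omega)]

lemma StrictlyResolvedBy.exists_isStrictResBy :
    ∀ {n : ℕ} {M : C}, StrictlyResolvedBy 𝒲 𝒳 n M → ∃ R : AugChain M, R.IsStrictResBy 𝒲 𝒳 n
  | 0, M, hM => ⟨.single M, AugChain.single_isRes M, AugChain.single_bddBy M, hM,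
    fun j hj₁ hj₀ => by omega⟩
  | n + 1, _, ⟨_, _, i, p, w, hS, hX, hK⟩ => by
    obtain ⟨R, hR, hterms, hbdd⟩ := hK.hasBddResBy
    refine ⟨R.prepend i p w, hR.prepend hS, hbdd.prepend, hX, ?_⟩
    rintro (_ | j) h₁ hj
    exacts [absurd h₁ (by omega), hterms j (by omega)]

lemma StrictlyResolvedBy.exists_hull (hcogen : IsCogenFor 𝒲 𝒳) :
    ∀ {n : ℕ} {M : C}, StrictlyResolvedBy 𝒲 𝒳 n M →
      ∃ (U X' : C) (i : M ⟶ U) (p : U ⟶ X') (w : i ≫ p = 0),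
        (ShortComplex.mk i p w).ShortExact ∧ 𝒳 X' ∧ ResolvedBy 𝒲 n U
  | 0, M, hM => by
    obtain ⟨W, X', i, p, w, hW, hX', hS⟩ := hcogen.2 M hM
    exact ⟨W, X', i, p, w, hS, hX', hW⟩
  | n + 1, _, ⟨K, X, i, p, w, hS, hX, hK⟩ => by
    obtain ⟨W, X', a, q, wa, hW, hX', hSa⟩ := hcogen.2 X hX
    have : Mono a := hSa.mono_f
    have sq := IsPushout.of_hasPushout a p
    exact ⟨_, X', _, _, _, sq.shortExact_of_shortExact_top hSa, hX',
      K, W, _, _, _, sq.shortExact_of_shortExact_left hS, hW, hK⟩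

lemma StrictlyResolvedBy.succ (hext : ClosedUnderExt 𝒳) (hcogen : IsCogenFor 𝒲 𝒳) {n : ℕ}
    {M₁ X M : C} {i : M₁ ⟶ X} {p : X ⟶ M} {w : i ≫ p = 0}
    (hS : (ShortComplex.mk i p w).ShortExact) (hX : 𝒳 X) (hM₁ : StrictlyResolvedBy 𝒲 𝒳 n M₁) :
    StrictlyResolvedBy 𝒲 𝒳 (n + 1) M := by
  obtain ⟨U, Y, j, q, wj, hSj, hY, hU⟩ := hM₁.exists_hull hcogen
  have : Mono i := hS.mono_f
  have : Mono j := hSj.mono_f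
  have sq := IsPushout.of_hasPushout i j
  exact ⟨U, _, _, _, _, sq.shortExact_of_shortExact_top hS,
    hext _ (sq.flip.shortExact_of_shortExact_top hSj) hX hY, hU⟩

lemma ResolvedBy.strictlyResolvedBy (hext : ClosedUnderExt 𝒳) (hcogen : IsCogenFor 𝒲 𝒳) :
    ∀ {n : ℕ} {M : C}, ResolvedBy 𝒳 n M → StrictlyResolvedBy 𝒲 𝒳 n M
  | 0, _, hM => hM
  | _ + 1, _, ⟨_, _, _, _, _, hS, hX, hK⟩ =>
    .succ hext hcogen hS hX (strictlyResolvedBy hext hcogen hK)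

lemma StrictlyResolvedBy.exists_approx (hext : ClosedUnderExt 𝒳) (hcogen : IsCogenFor 𝒲 𝒳) :
    ∀ {n : ℕ} {M : C}, StrictlyResolvedBy 𝒲 𝒳 n M →
      ∃ (K X₀ : C) (i : K ⟶ X₀) (p : X₀ ⟶ M) (w : i ≫ p = 0),
        (ShortComplex.mk i p w).ShortExact ∧ 𝒳 X₀ ∧ HasBddRes 𝒲 K
  | 0, M, hM => by
    obtain ⟨W, -, -, -, -, hW, -⟩ := hcogen.2 M hM
    have hS := (ShortComplex.Splitting.ofHasBinaryBiproduct W M).shortExact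
    exact ⟨W, W ⊞ M, _, _, _, hS, hext _ hS (hcogen.1 W hW) hM, 0,
      (show ResolvedBy 𝒲 0 W from hW).hasBddResBy⟩
  | n + 1, _, ⟨K, X, i, p, w, hS, hX, hK⟩ => ⟨K, X, i, p, w, hS, hX, n, hK.hasBddResBy⟩

end Resolutions

theorem stmt4_general {C : Type u} [Category.{v} C] [Abelian C]
    (𝒲 𝒳 : C → Prop) (h𝒳 : IsoClosed 𝒳)
    (hext : ClosedUnderExt 𝒳) (hcogen : IsCogenFor 𝒲 𝒳)
    {M : C} (n : ℕ) (hM : HasBddResBy 𝒳 M n) :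
    (∃ m, m ≤ n ∧ ∃ R : AugChain M, R.IsStrictResBy 𝒲 𝒳 m) ∧
    (∃ (K X₀ : C) (i : K ⟶ X₀) (p : X₀ ⟶ M) (hw : i ≫ p = 0),
      (ShortComplex.mk i p hw).ShortExact ∧ 𝒳 X₀ ∧ HasBddRes 𝒲 K) ∧
    (∃ (K' X' : C) (i : M ⟶ K') (p : K' ⟶ X') (hw : i ≫ p = 0),
      (ShortComplex.mk i p hw).ShortExact ∧ 𝒳 X' ∧ HasBddRes 𝒲 K') := by
  obtain ⟨R, hR⟩ := hM
  have hstrict := (hR.resolvedBy h𝒳).strictlyResolvedBy hext hcogen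
  obtain ⟨U, X', i, p, w, hS, hX', hU⟩ := hstrict.exists_hull hcogen
  exact ⟨⟨n, le_rfl, hstrict.exists_isStrictResBy⟩, hstrict.exists_approx hext hcogen,
    ⟨U, X', i, p, w, hS, hX', n, hU.hasBddResBy⟩⟩

/-- Lemma 3.5(a), after Auslander–Buchweitz. Let `𝒳` be closed under
extensions and `𝒲` a cogenerator for `𝒳`. If `M` admits a bounded `𝒳`-resolution of
length `n`, then: (i) `M` admits a bounded strict `𝒲𝒳`-resolution of length at most
`n`; (ii) `M` admits a `𝒲𝒳`-approximation `0 → K → X₀ → M → 0` with `X₀ ∈ 𝒳` and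
`K` of finite `𝒲`-projective dimension; (iii) `M` admits a `𝒲𝒳`-hull
`0 → M → K' → X' → 0` with `X' ∈ 𝒳` and `K'` of finite `𝒲`-projective dimension. -/
theorem stmt4 {C : Type u} [Category.{v} C] [Abelian C]
    (𝒲 𝒳 : C → Prop) (h𝒲 : IsoClosed 𝒲) (h𝒳 : IsoClosed 𝒳)
    (hext : ClosedUnderExt 𝒳) (hcogen : IsCogenFor 𝒲 𝒳)
    {M : C} (n : ℕ) (hM : HasBddResBy 𝒳 M n) :
    (∃ m, m ≤ n ∧ ∃ R : AugChain M, R.IsStrictResBy 𝒲 𝒳 m) ∧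
    (∃ (K X₀ : C) (i : K ⟶ X₀) (p : X₀ ⟶ M) (hw : i ≫ p = 0),
      (ShortComplex.mk i p hw).ShortExact ∧ 𝒳 X₀ ∧ HasBddRes 𝒲 K) ∧
    (∃ (K' X' : C) (i : M ⟶ K') (p : K' ⟶ X') (hw : i ≫ p = 0),
      (ShortComplex.mk i p hw).ShortExact ∧ 𝒳 X' ∧ HasBddRes 𝒲 K') :=
  stmt4_general 𝒲 𝒳 h𝒳 hext hcogen n hM
end

section
/- Let A be an abelian category and X a class of objects of A closed under direct summands. Let n ≥ 0 and let X → M be a proper X-resolution of an object M such that for every object N of A the (n+1)-st cohomology of the complex Hom_A(X, N) vanishes (i.e., H₋₍ₙ₊₁₎(Hom_A(X, N)) = 0 for all N). Then the n-th syzygy of the resolution lies in X — that is, Ker(∂^X_{n−1}) ∈ X, where Ker(∂^X_{−1}) is interpreted as M — and consequently M admits a bounded X-resolution of length at most n. -/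
/-! Common definitions: relative homological algebra in an abelian category,
following Sather-Wagstaff–Sharif–White, "Gorenstein cohomology in abelian categories". -/

open CategoryTheory CategoryTheory.Limits Opposite

universe w v u

/-! Write `Kₙ` for the cycles of `X⁺` in degree `n`, so that `0 → Kₙ₊₁ → Xₙ → Kₙ → 0` is
exact. The canonical surjection `Xₙ₊₁ ↠ Kₙ₊₁` is a cocycle of `Hom_A(X, Kₙ₊₁)` in degree
`n + 1`; since that cohomology vanishes, it extends along `∂ₙ₊₁` to a map `Xₙ → Kₙ₊₁`, which
is then a retraction of `Kₙ₊₁ ↪ Xₙ`. So the sequence splits and `Kₙ` is a direct summand of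
`Xₙ ∈ 𝒳`. Cutting `X⁺` off at `Kₙ` gives the bounded resolution
`0 → Kₙ → Xₙ₋₁ → ⋯ → X₀ → M → 0`. -/

namespace ComplexShape

def downFin (N : ℕ) : ComplexShape (Fin (N + 1)) where
  Rel i j := (j : ℕ) + 1 = i
  next_eq h h' := Fin.ext (by omega)
  prev_eq h h' := Fin.ext (by omega)

@[simps!]
def embeddingDownFin (N : ℕ) : (downFin N).Embedding (down ℕ) :=
  Embedding.mk' _ _ Fin.val Fin.val_injective (fun _ _ => Iff.rfl)

instance (N : ℕ) : (embeddingDownFin N).IsTruncGE where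
  rel' _ _ h := h
  mem_next {j k} (h : k + 1 = j) := ⟨⟨k, by omega⟩, rfl⟩

lemma embeddingDownFin_boundaryGE_iff (N : ℕ) (j : Fin (N + 1)) :
    (embeddingDownFin N).BoundaryGE j ↔ (j : ℕ) = N := by
  constructor
  · rintro ⟨-, h⟩
    by_contra hj
    exact h ⟨j + 1, by omega⟩ rfl
  · intro hj
    refine (embeddingDownFin N).boundaryGE (i' := N + 1) (by simp [hj]) fun i hi => ?_
    change (i : ℕ) = N + 1 at hi
    omega

end ComplexShape

namespace HomologicalComplex

variable {C : Type u} [Category.{v} C] [Abelian C] {ι : Type*} {c : ComplexShape ι}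
  (K : HomologicalComplex C c)

variable {K} in
lemma ExactAt.epi_toCycles {i j : ι} (hj : K.ExactAt j) (hij : c.Rel i j) :
    Epi (K.toCycles i j) := by
  have := ((K.exactAt_iff' i j (c.next j) (c.prev_eq' hij) rfl).1 hj).epi_toCycles
  rw [← K.toCycles_cyclesIsoSc'_hom i j (c.next j) (c.prev_eq' hij) rfl] at this
  exact (epi_comp_iff_of_isIso _ _).1 this

variable {K} in
lemma ExactAt.mono_fromOpcycles {i j : ι} (hi : K.ExactAt i) (hij : c.Rel i j) :
    Mono (K.fromOpcycles i j) := by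
  have := ((K.exactAt_iff' (c.prev i) i j rfl (c.next_eq' hij)).1 hi).mono_fromOpcycles
  rw [← K.opcyclesIsoSc'_inv_fromOpcycles (c.prev i) i j rfl (c.next_eq' hij)] at this
  exact (mono_comp_iff_of_isIso _ _).1 this

lemma isIso_opcyclesToCycles {i j : ι} (hi : K.ExactAt i) (hj : K.ExactAt j)
    (hij : c.Rel i j) : IsIso (K.opcyclesToCycles i j) := by
  have := hi.mono_fromOpcycles hij
  have := hj.epi_toCycles hij
  have : Mono (K.opcyclesToCycles i j) := mono_of_mono_fac (K.opcyclesToCycles_iCycles i j)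
  have : Epi (K.opcyclesToCycles i j) := epi_of_epi_fac (K.pOpcycles_opcyclesToCycles i j)
  exact isIso_of_mono_of_epi _

noncomputable def opcyclesIsoCycles {i j : ι} (hi : K.ExactAt i) (hj : K.ExactAt j)
    (hij : c.Rel i j) : K.opcycles i ≅ K.cycles j :=
  have := K.isIso_opcyclesToCycles hi hj hij
  asIso (K.opcyclesToCycles i j)

lemma exact_iCycles_toCycles {i j : ι} (hij : c.Rel i j) :
    (ShortComplex.mk (K.iCycles i) (K.toCycles i j)
      (by simp [← cancel_mono (K.iCycles j)])).Exact := by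
  let φ : ShortComplex.mk (K.iCycles i) (K.toCycles i j)
      (by simp [← cancel_mono (K.iCycles j)]) ⟶ ShortComplex.mk (K.iCycles i) (K.d i j) (by simp) :=
    { τ₁ := 𝟙 _, τ₂ := 𝟙 _, τ₃ := K.iCycles j }
  rw [ShortComplex.exact_iff_of_epi_of_isIso_of_mono φ]
  exact ShortComplex.exact_of_f_is_kernel _ (K.cyclesIsKernel i j (c.next_eq' hij))

noncomputable def retractCyclesOfFactorization {h i j : ι} (hi : K.ExactAt i)
    (hj : K.ExactAt j) (hhi : c.Rel h i) (hij : c.Rel i j) (q : K.X i ⟶ K.cycles i)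
    (hq : K.d h i ≫ q = K.toCycles h i) : Retract (K.cycles j) (K.X i) :=
  have := hi.epi_toCycles hhi
  have hq' : K.iCycles i ≫ q = 𝟙 _ := by
    rw [← cancel_epi (K.toCycles h i), ← Category.assoc, toCycles_i, hq, Category.comp_id]
  have := hj.epi_toCycles hij
  let σ := ShortComplex.Splitting.ofExactOfRetraction _ (K.exact_iCycles_toCycles hij) q hq'
    inferInstance
  ⟨σ.s, K.toCycles i j, σ.s_g⟩

end HomologicalComplex

section

variable {C : Type u} [Category.{v} C] [Abelian C]

lemma exists_d_comp_eq_of_exactAt_homToCplx {ι : Type*} {c : ComplexShape ι}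
    (K : HomologicalComplex C c) (N : C) {h i j : ι} (hhi : c.Rel h i) (hij : c.Rel i j)
    (hK : ((homToCplx c N).obj (op K)).ExactAt i) (f : K.X i ⟶ N) (hf : K.d h i ≫ f = 0) :
    ∃ g : K.X j ⟶ N, K.d i j ≫ g = f := by
  rw [HomologicalComplex.exactAt_iff' _ j i h (c.symm.prev_eq' hij) (c.symm.next_eq' hhi),
    ShortComplex.ab_exact_iff] at hK
  exact hK f hf

namespace AugChain

variable {M : C}

noncomputable def ofComplex (T : ChainComplex C ℕ) (e : T.X 0 ≅ M) : AugChain M where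
  cx := ChainComplex.truncate.obj T
  π := T.d 1 0 ≫ e.hom
  w := (T.d_comp_d_assoc 2 1 0 e.hom).trans zero_comp

noncomputable def ofComplexAugIso (T : ChainComplex C ℕ) (e : T.X 0 ≅ M) :
    (ofComplex T e).aug ≅ T :=
  HomologicalComplex.Hom.isoOfComponents (fun | 0 => e.symm | _ + 1 => Iso.refl _) (by
    rintro _ (_ | j) rfl <;> dsimp [ofComplex, aug, ChainComplex.truncate] <;> simp)

lemma ofComplex_isRes {T : ChainComplex C ℕ} (hT : T.Acyclic) (e : T.X 0 ≅ M) :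
    (ofComplex T e).IsRes :=
  fun j => (hT j).of_iso (ofComplexAugIso T e).symm

lemma mem_cycles_of_isZero_homology (𝒳 : C → Prop)
    (hsummand : ∀ (X A : C), 𝒳 X → (∃ (i : A ⟶ X) (r : X ⟶ A), i ≫ r = 𝟙 A) → 𝒳 A)
    (R : AugChain M) (hres : R.IsRes) (n : ℕ) (hmem : 𝒳 (R.cx.X n))
    (hvan : IsZero (((homToCplx (ComplexShape.down ℕ)
      (R.aug.cycles (n + 1))).obj (op R.cx)).homology (n + 1))) :
    𝒳 (R.aug.cycles n) := by
  obtain ⟨q, hq⟩ := exists_d_comp_eq_of_exactAt_homToCplx R.cx _ (h := n + 2) rfl rfl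
    ((HomologicalComplex.exactAt_iff_isZero_homology _ _).2 hvan)
    (R.aug.toCycles (n + 2) (n + 1)) (R.aug.d_toCycles (n + 3) (n + 2) (n + 1))
  let ρ := R.aug.retractCyclesOfFactorization (hres (n + 1)) (hres n) (h := n + 2) rfl rfl q hq
  exact hsummand _ _ hmem ⟨ρ.i, ρ.r, ρ.retract⟩

lemma hasBddResBy_of_mem_cycles (𝒳 : C → Prop) (h𝒳 : IsoClosed 𝒳) (R : AugChain M)
    (hres : R.IsRes) (n : ℕ) (hmem : ∀ j < n, 𝒳 (R.cx.X j)) (hK : 𝒳 (R.aug.cycles n)) :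
    HasBddResBy 𝒳 M n := by
  let e := ComplexShape.embeddingDownFin (n + 1)
  have he (j : Fin (n + 2)) : e.BoundaryGE j ↔ (j : ℕ) = n + 1 :=
    ComplexShape.embeddingDownFin_boundaryGE_iff _ _
  -- `X⁺` truncated above degree `n + 1`, where it is replaced by `opcycles (n + 1) ≅ Kₙ`
  let T := R.aug.truncGE e
  refine ⟨ofComplex T (R.aug.truncGEXIso e (i := 0) rfl (by simp [he])),
    ofComplex_isRes (HomologicalComplex.Acyclic.truncGE hres e) _, fun j hj => ?_, fun j hj => ?_⟩
  · obtain hj | rfl := hj.lt_or_eq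
    · exact h𝒳 (R.aug.truncGEXIso e (i := ⟨j + 1, by omega⟩) rfl (by simp [he]; omega)).symm
        (hmem j hj)
    · exact h𝒳 (R.aug.truncGEXIsoOpcycles e (i := Fin.last _) rfl (by simp [he]) ≪≫
        R.aug.opcyclesIsoCycles (hres (j + 1)) (hres j) rfl).symm hK
  · refine (R.aug.truncGE' e).isZero_extend_X e _ fun i hi => ?_
    change (i : ℕ) = j + 1 at hi
    omega

end AugChain

end

/-- Proposition 4.5(a). Let `𝒳` be closed under direct summands,
`n ≥ 0`, and let `X → M` be a proper `𝒳`-resolution such that the relative cohomology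
`Ext^{n+1}_{𝒳A}(M, N) = H₋₍ₙ₊₁₎(Hom_A(X, N))` vanishes for every object `N`. Then the
`n`-th syzygy `Ker(∂^X_{n-1})` lies in `𝒳` (where `Ker(∂^X_{-1}) = M`), and `M` admits
a bounded `𝒳`-resolution of length at most `n`. Here the `n`-th syzygy is the cycle
object of the augmented complex in degree `n`. -/
theorem stmt6 {C : Type u} [Category.{v} C] [Abelian C]
    (𝒳 : C → Prop) (h𝒳 : IsoClosed 𝒳)
    (hsummand : ∀ (X A : C), 𝒳 X → (∃ (i : A ⟶ X) (r : X ⟶ A), i ≫ r = 𝟙 A) → 𝒳 A)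
    {M : C} (R : AugChain M) (hR : R.IsProperRes 𝒳) (n : ℕ)
    (hvan : ∀ N : C,
      IsZero (((homToCplx (ComplexShape.down ℕ) N).obj (op R.cx)).homology (n + 1))) :
    𝒳 (R.aug.cycles n) ∧ HasBddResBy 𝒳 M n := by
  obtain ⟨hres, hmem, -⟩ := hR
  have hK := R.mem_cycles_of_isZero_homology 𝒳 hsummand hres n (hmem n) (hvan _)
  exact ⟨hK, R.hasBddResBy_of_mem_cycles 𝒳 h𝒳 hres n (fun j _ => hmem j) hK⟩
end
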